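/- Let S be a type, Q a finite type of locations with subsets Q₀ (initial) and Q_F (accepting), Δ : Q → Q → Φ a transition labeling by predicates over S, and ξ = (x_0, …, x_l) ∈ S^{l+1} a trace. Define the (max,+) weight of ξ as w⁺(ξ) = sup over all location sequences (q_0, …, q_{l+1}) with q_0 ∈ Q₀ and q_{l+1} ∈ Q_F of Σ_{t=0}^{l} λ⁺(x_t, Δ(q_t, q_{t+1})) (supremum in EReal, equal to -∞ if no such sequence exists). Then w⁺(ξ) = 0 if and only if ξ ⊨ A, i.e., there exists a sequence (q_0, …, q_{l+1}) with q_0 ∈ Q₀, q_{l+1} ∈ Q_F, and x_t ⊨ Δ(q_t, q_{t+1}) for all 0 ≤ t ≤ l. -/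

import Mathlib

/-!
Every weight `λ⁺(s, φ)` is `≤ 0`, with equality exactly when `s ⊨ φ`: an atom contributes
its negative value when violated, and `+`, `max` of nonpositive numbers vanish iff both
(resp. one) of them do. Hence the weight of a run is `0` iff the run is accepting, and since
there are only finitely many runs, the supremum `0` is attained by one of them.
-/

/-- Predicates over a state space `S`:
`φ ::= ⊤ | ⊥ | (μ ≥ 0) | φ ∧ φ | φ ∨ φ` where each atom carries `μ : S → ℝ`. -/
inductive Phi (S : Type*) where
  | top : Phi S
  | bot : Phi S
  | atom (μ : S → ℝ) : Phi S
  | and (φ₁ φ₂ : Phi S) : Phi S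
  | or (φ₁ φ₂ : Phi S) : Phi S

/-- Satisfaction `s ⊨ φ` of a predicate by a state. -/
def Phi.Sat {S : Type*} (s : S) : Phi S → Prop
  | .top => True
  | .bot => False
  | .atom μ => μ s ≥ 0
  | .and φ₁ φ₂ => φ₁.Sat s ∧ φ₂.Sat s
  | .or φ₁ φ₂ => φ₁.Sat s ∨ φ₂.Sat s

/-- The `(max,+)` generalized weight `λ⁺ : S × Φ → EReal`. -/
noncomputable def lamP {S : Type*} (s : S) : Phi S → EReal
  | .top => 0
  | .bot => ⊥
  | .atom μ => if μ s ≥ 0 then 0 else ((μ s : ℝ) : EReal)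
  | .and φ₁ φ₂ => lamP s φ₁ + lamP s φ₂
  | .or φ₁ φ₂ => max (lamP s φ₁) (lamP s φ₂)

theorem iSup_eq_iff_exists_eq_of_finite {α ι : Type*} [CompleteLinearOrder α] [Finite ι]
    {f : ι → α} {a : α} (ha : a ≠ ⊥) (hf : ∀ i, f i ≤ a) :
    ⨆ i, f i = a ↔ ∃ i, f i = a := by
  constructor
  · intro h
    have : Nonempty ι := by
      by_contra hι
      rw [not_nonempty_iff] at hι
      exact ha (h ▸ iSup_of_empty f)
    obtain ⟨i, hi⟩ := exists_eq_ciSup_of_finite (f := f)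
    exact ⟨i, hi.trans h⟩
  · rintro ⟨i, rfl⟩
    exact le_antisymm (iSup_le hf) (le_iSup f i)

section Weight

variable {S : Type*} (s : S)

theorem lamP_nonpos : ∀ φ : Phi S, lamP s φ ≤ 0
  | .top => le_rfl
  | .bot => bot_le
  | .atom μ => by
      by_cases h : μ s ≥ 0
      · simp [lamP, h]
      · simpa [lamP, h] using (not_le.mp h).le
  | .and φ₁ φ₂ => add_nonpos (lamP_nonpos φ₁) (lamP_nonpos φ₂)
  | .or φ₁ φ₂ => max_le (lamP_nonpos φ₁) (lamP_nonpos φ₂)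

theorem lamP_eq_zero_iff_sat : ∀ φ : Phi S, lamP s φ = 0 ↔ φ.Sat s
  | .top => by simp [lamP, Phi.Sat]
  | .bot => by simp [lamP, Phi.Sat]
  | .atom μ => by
      by_cases h : μ s ≥ 0
      · simp [lamP, Phi.Sat, h]
      · simp only [lamP, Phi.Sat, h, if_false, EReal.coe_eq_zero, iff_false]
        exact fun h0 => h h0.ge
  | .and φ₁ φ₂ => by
      rw [Phi.Sat, ← lamP_eq_zero_iff_sat φ₁, ← lamP_eq_zero_iff_sat φ₂]
      exact add_eq_zero_iff_of_nonneg (α := ERealᵒᵈ) (lamP_nonpos s φ₁) (lamP_nonpos s φ₂)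
  | .or φ₁ φ₂ => by
      rw [Phi.Sat, ← lamP_eq_zero_iff_sat φ₁, ← lamP_eq_zero_iff_sat φ₂]
      show max (lamP s φ₁) (lamP s φ₂) = 0 ↔ _
      rw [max_eq_iff]
      have h₁ := lamP_nonpos s φ₁
      have h₂ := lamP_nonpos s φ₂
      constructor
      · rintro (⟨h, -⟩ | ⟨h, -⟩)
        exacts [.inl h, .inr h]
      · rintro (h | h)
        · exact .inl ⟨h, h ▸ h₂⟩
        · exact .inr ⟨h, h ▸ h₁⟩

end Weight

theorem sum_lamP_eq_zero_iff_forall_sat {S ι : Type*} [Fintype ι] (x : ι → S) (φ : ι → Phi S) :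
    ∑ t, lamP (x t) (φ t) = 0 ↔ ∀ t, (φ t).Sat (x t) := by
  rw [Finset.sum_eq_zero_iff_of_nonpos fun t _ => lamP_nonpos _ _]
  simp [lamP_eq_zero_iff_sat]

/-- **The `(max,+)` trace weight vanishes exactly on accepted traces.**
For a symbolic automaton with finitely many locations `Q`, initial locations
`Q₀`, accepting locations `Q_F`, and transition labels `Δ`, and a trace
`x = (x 0, …, x l)`, define `w⁺(ξ)` as the supremum (in `EReal`, `= -∞` if no
such sequence exists) over all location sequences `q : Fin (l+2) → Q` with
`q 0 ∈ Q₀` and `q (l+1) ∈ Q_F` of `Σ_{t=0}^{l} λ⁺(x t, Δ (q t) (q (t+1)))`.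
Then `w⁺(ξ) = 0` iff `ξ ⊨ A`, i.e., there is such a sequence with
`x t ⊨ Δ (q t) (q (t+1))` for all `0 ≤ t ≤ l`. -/
theorem maxplus_trace_weight_eq_zero_iff_accepted
    {S Q : Type*} [Fintype Q] (Q₀ QF : Set Q) (Δ : Q → Q → Phi S)
    (l : ℕ) (x : Fin (l + 1) → S) :
    (⨆ q : {q : Fin (l + 2) → Q // q 0 ∈ Q₀ ∧ q (Fin.last (l + 1)) ∈ QF},
        ∑ t : Fin (l + 1), lamP (x t) (Δ (q.1 t.castSucc) (q.1 t.succ))) = 0 ↔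
      ∃ q : Fin (l + 2) → Q, q 0 ∈ Q₀ ∧ q (Fin.last (l + 1)) ∈ QF ∧
        ∀ t : Fin (l + 1), Phi.Sat (x t) (Δ (q t.castSucc) (q t.succ)) := by
  rw [iSup_eq_iff_exists_eq_of_finite EReal.zero_ne_bot
    fun q => Finset.sum_nonpos fun t _ => lamP_nonpos _ _]
  simp only [sum_lamP_eq_zero_iff_forall_sat, Subtype.exists, exists_prop, and_assoc]
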